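/- In the joint liquid-illiquid system, if all components of the random intensities satisfy λ_t⁰, λ_t¹, δ_t ∈ [0,1]^{n_ill} and returns R_t^ill, R_t^liq ≥ 0, and the controls satisfy h_t, n_t, s_t ≥ 0 with the outside-cash rule s_t = max(0, −(h_tᵀR_t^liq − 𝟙ᵀC_t + 𝟙ᵀD_t)), then all states L_t, I_t, K_t remain nonnegative for all t given nonnegative initial state. -/
import Mathlib


open Matrix

/-- In the joint liquid-illiquid system with the outside-cash rule, all states
`L`, `I`, `K` remain nonnegative given nonnegative initial state and controls. -/
theorem joint_system_states_nonneg
    (nill nliq : ℕ)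
    (K I nc C D : ℕ → Fin nill → ℝ)
    (Rill lam0 lam1 delta : ℕ → Fin nill → ℝ)
    (h : ℕ → Fin nliq → ℝ) (Rliq : ℕ → Fin nliq → ℝ)
    (L s : ℕ → ℝ)
    (hlam0 : ∀ t i, lam0 t i ∈ Set.Icc (0:ℝ) 1)
    (hlam1 : ∀ t i, lam1 t i ∈ Set.Icc (0:ℝ) 1)
    (hdelta : ∀ t i, delta t i ∈ Set.Icc (0:ℝ) 1)
    (hRill : ∀ t i, 0 ≤ Rill t i)
    (hRliq : ∀ t j, 0 ≤ Rliq t j)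
    (hh : ∀ t j, 0 ≤ h t j)
    (hn : ∀ t i, 0 ≤ nc t i)
    (hC : ∀ t i, C t i = lam0 t i * nc t i + lam1 t i * K t i)
    (hD : ∀ t i, D t i = Rill t i * delta t i * I t i)
    (hs : ∀ t, s t = max 0 (-((h t ⬝ᵥ Rliq t) - (∑ i, C t i) + (∑ i, D t i))))
    (halloc : ∀ t, (∑ j, h t j) = L t)
    (hKdyn : ∀ t i, K (t + 1) i = K t i + nc t i - C t i)
    (hIdyn : ∀ t i, I (t + 1) i = Rill t i * I t i + C t i - D t i)
    (hLdyn : ∀ t, L (t + 1) = (h t ⬝ᵥ Rliq t) - (∑ i, C t i) + (∑ i, D t i) + s t)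
    (hK1 : ∀ i, 0 ≤ K 1 i) (hI1 : ∀ i, 0 ≤ I 1 i) (hL1 : 0 ≤ L 1) :
    ∀ t ≥ 1, 0 ≤ L t ∧ (∀ i, 0 ≤ I t i) ∧ (∀ i, 0 ≤ K t i) := by
  intro t ht
  induction t with
  | zero => omega
  | succ n ih =>
    rcases Nat.lt_or_ge n 1 with h0 | h1
    · interval_cases n
      exact ⟨hL1, hI1, hK1⟩
    · obtain ⟨hL, hI, hK⟩ := ih h1
      refine ⟨?_, ?_, ?_⟩
      · rw [hLdyn n, hs n]
        set x := (h n ⬝ᵥ Rliq n) - (∑ i, C n i) + (∑ i, D n i)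
        rcases le_or_gt 0 x with hx | hx
        · have : max 0 (-x) = 0 := by simp [neg_nonpos.mpr hx, max_eq_left]
          linarith [this]
        · have : max 0 (-x) = -x := max_eq_right (by linarith)
          linarith [this]
      · intro i
        rw [hIdyn n i, hD n i, hC n i]
        have h1 := hlam0 n i; have h2 := hlam1 n i; have h3 := hdelta n i
        simp only [Set.mem_Icc] at h1 h2 h3
        have key : Rill n i * I n i - Rill n i * delta n i * I n i
            = Rill n i * (1 - delta n i) * I n i := by ring
        have t1 : 0 ≤ Rill n i * (1 - delta n i) * I n i :=
          mul_nonneg (mul_nonneg (hRill n i) (by linarith [h3.2])) (hI i)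
        have t2 : 0 ≤ lam0 n i * nc n i := mul_nonneg h1.1 (hn n i)
        have t3 : 0 ≤ lam1 n i * K n i := mul_nonneg h2.1 (hK i)
        linarith
      · intro i
        rw [hKdyn n i, hC n i]
        have h1 := hlam0 n i; have h2 := hlam1 n i
        simp only [Set.mem_Icc] at h1 h2
        have t1 : 0 ≤ (1 - lam0 n i) * nc n i :=
          mul_nonneg (by linarith [h1.2]) (hn n i)
        have t2 : 0 ≤ (1 - lam1 n i) * K n i :=
          mul_nonneg (by linarith [h2.2]) (hK i)
        linarith
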